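/- arXiv:1305.2325 — 7 statements merged into one kernel-verified Lean document; each statement's English description precedes it below -/
import Mathlib

section
/- Let A ⊆ ℤ have positive upper (Banach) density δ = limsup_{n→∞} #(A ∩ [-n,n])/(2n+1) > 0, and let ε ∈ (0,1). For k ∈ ℤ set B_k = A ∩ (A - k) and δ_k = upper density of B_k. Then the set F = {k ∈ ℤ : δ_k > (1-ε)δ²} is syndetic, i.e., there exists a finite set R ⊆ ℤ with F + R = ℤ. -/
open Filter Topology
open scoped Classical ENNReal

noncomputable def upperDensity (A : Set ℕ) : ℝ :=
  limsup (fun n : ℕ => (((Finset.range (n+1)).filter (· ∈ A)).card : ℝ) / (n+1)) atTop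

noncomputable def lowerDensity (A : Set ℕ) : ℝ :=
  liminf (fun n : ℕ => (((Finset.range (n+1)).filter (· ∈ A)).card : ℝ) / (n+1)) atTop

noncomputable def upperDensityZ (A : Set ℤ) : ℝ :=
  limsup (fun n : ℕ => (((Finset.Icc (-(n:ℤ)) (n:ℤ)).filter (· ∈ A)).card : ℝ) / (2*n+1)) atTop

def freqHCVec {X : Type*} [NormedAddCommGroup X] [NormedSpace ℝ X]
    (T : X →L[ℝ] X) (x : X) : Prop :=
  ∀ U : Set X, IsOpen U → U.Nonempty → 0 < lowerDensity {n : ℕ | (T ^ n) x ∈ U}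

def uFreqHCVec {X : Type*} [NormedAddCommGroup X] [NormedSpace ℝ X]
    (T : X →L[ℝ] X) (x : X) : Prop :=
  ∀ U : Set X, IsOpen U → U.Nonempty → 0 < upperDensity {n : ℕ | (T ^ n) x ∈ U}

/-!
If `F` were not syndetic, one could greedily pick integers `t₀, t₁, …` with `t j - t i ∉ F`
for all `i < j`. On a window `[-n, n]` where `A` has density close to `δ`, the translates
`A - t₀, …, A - t_{M-1}` all have density about `δ`, so Cauchy–Schwarz applied to the number of
translates containing a point forces two of them to meet in density at least `(M δ² - 1)/(M - 1)`.
For large `M` this exceeds `(1 - ε) δ²`, putting some `t j - t i` in `F`.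
-/

open Finset

theorem exists_lt_sq_sum_card_filter_le {ι α : Type*} [Fintype ι] [LinearOrder ι]
    (hι : 2 ≤ Fintype.card ι) (I : Finset α) (p : ι → α → Prop) :
    ∃ i j, i < j ∧ (∑ k, #{x ∈ I | p k x}) ^ 2 ≤
      #I * (Fintype.card ι * #I +
        Fintype.card ι * (Fintype.card ι - 1) * #{x ∈ I | p i x ∧ p j x}) := by
  set M := Fintype.card ι
  set P : ι → ι → ℕ := fun i j => #{x ∈ I | p i x ∧ p j x}
  have hoff : (univ : Finset ι).offDiag.Nonempty := by
    rw [← card_pos, offDiag_card, card_univ]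
    apply Nat.sub_pos_of_lt
    nlinarith
  obtain ⟨⟨a, b⟩, hab, hmax⟩ := (univ : Finset ι).offDiag.exists_max_image (fun q => P q.1 q.2) hoff
  obtain ⟨i, j, hij, hP⟩ : ∃ i j, i < j ∧ P i j = P a b := by
    rcases (mem_offDiag.1 hab).2.2.lt_or_gt with h | h
    · exact ⟨a, b, h, rfl⟩
    · exact ⟨b, a, h, by simp only [P, and_comm]⟩
  refine ⟨i, j, hij, ?_⟩
  set c : α → ℕ := fun x => ∑ k, if p k x then 1 else 0
  have hsum : ∑ x ∈ I, c x = ∑ k, #{x ∈ I | p k x} := by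
    simp only [c, card_filter]
    exact sum_comm
  have hsq : ∑ x ∈ I, c x ^ 2 = ∑ k, ∑ l, P k l := by
    simp only [c, P, card_filter, sq, sum_mul_sum, ite_zero_mul_ite_zero, mul_one]
    rw [sum_comm]
    exact sum_congr rfl fun k _ => sum_comm
  have hrow : ∀ k, ∑ l, P k l ≤ #I + (M - 1) * P a b := by
    intro k
    rw [← add_sum_erase _ _ (mem_univ k)]
    gcongr
    · exact card_filter_le _ _
    · have := sum_le_card_nsmul ((univ : Finset ι).erase k) (P k) (P a b) fun l hl =>
        hmax (k, l) (by simpa using (ne_of_mem_erase hl).symm)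
      simpa [card_erase_of_mem] using this
  calc (∑ k, #{x ∈ I | p k x}) ^ 2 = (∑ x ∈ I, c x) ^ 2 := by rw [hsum]
    _ ≤ #I * ∑ x ∈ I, c x ^ 2 := sq_sum_le_card_mul_sum_sq
    _ = #I * ∑ k, ∑ l, P k l := by rw [hsq]
    _ ≤ #I * ∑ _k : ι, (#I + (M - 1) * P a b) := by gcongr with k; exact hrow k
    _ = #I * (M * #I + M * (M - 1) * P i j) := by
      rw [sum_const, card_univ, smul_eq_mul, hP]; ring

noncomputable def windowCount (B : Set ℤ) (n : ℕ) : ℕ := #{x ∈ Icc (-(n : ℤ)) n | x ∈ B}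

lemma windowCount_le (B : Set ℤ) (n : ℕ) : windowCount B n ≤ 2 * n + 1 := by
  have := card_filter_le (Icc (-(n : ℤ)) n) (· ∈ B)
  rw [Int.card_Icc] at this
  unfold windowCount
  omega

lemma windowCount_le_card_filter_add_mem (A : Set ℤ) (n T : ℕ) {t : ℤ} (ht : t.natAbs ≤ T) :
    windowCount A n ≤ #{x ∈ Icc (-((n + T : ℕ) : ℤ)) (n + T : ℕ) | x + t ∈ A} := by
  refine card_le_card_of_injOn (· - t) (fun y hy => ?_) sub_left_injective.injOn
  simp only [coe_filter, mem_Icc, Set.mem_ofPred_eq] at hy ⊢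
  refine ⟨⟨?_, ?_⟩, by simpa using hy.2⟩ <;> push_cast <;> omega

lemma card_filter_add_mem_and_le_windowCount (A : Set ℤ) (n T : ℕ) {s : ℤ} (hs : s.natAbs ≤ T)
    (s' : ℤ) :
    #{x ∈ Icc (-(n : ℤ)) n | x + s ∈ A ∧ x + s' ∈ A} ≤
      windowCount {x | x ∈ A ∧ x + (s' - s) ∈ A} (n + T) := by
  refine card_le_card_of_injOn (· + s) (fun x hx => ?_) (add_left_injective s).injOn
  simp only [coe_filter, mem_Icc, Set.mem_ofPred_eq] at hx ⊢
  refine ⟨⟨?_, ?_⟩, hx.2.1, by rw [add_add_sub_cancel]; exact hx.2.2⟩ <;> push_cast <;> omega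

lemma windowCount_div_mem_Icc (B : Set ℤ) (n : ℕ) :
    (windowCount B n : ℝ) / (2 * n + 1) ∈ Set.Icc 0 1 := by
  refine ⟨by positivity, div_le_one_of_le₀ ?_ (by positivity)⟩
  exact_mod_cast windowCount_le B n

lemma upperDensityZ_eq_limsup (B : Set ℤ) :
    upperDensityZ B = limsup (fun n : ℕ => (windowCount B n : ℝ) / (2 * n + 1)) atTop := rfl

lemma frequently_lt_windowCount {A : Set ℤ} {δ : ℝ} (hδ : δ < upperDensityZ A) :
    ∃ᶠ n : ℕ in atTop, δ * (2 * n + 1) < windowCount A n := by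
  rw [upperDensityZ_eq_limsup] at hδ
  have hcobdd : IsCoboundedUnder (· ≤ ·) atTop
      (fun n : ℕ => (windowCount A n : ℝ) / (2 * n + 1)) :=
    isCoboundedUnder_le_of_le atTop fun n => (windowCount_div_mem_Icc A n).1
  refine (frequently_lt_of_lt_limsup hcobdd hδ).mono fun n hn => ?_
  rwa [lt_div_iff₀ (by positivity)] at hn

lemma le_upperDensityZ_of_frequently_le {B : Set ℤ} {e : ℕ → ℝ} {L : ℝ}
    (he : Tendsto e atTop (𝓝 L)) (h : ∃ᶠ n in atTop, e n ≤ windowCount B n / (2 * n + 1)) :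
    L ≤ upperDensityZ B := by
  rw [upperDensityZ_eq_limsup]
  refine le_of_forall_lt_imp_le_of_dense fun c hc => ?_
  have hbdd : IsBoundedUnder (· ≤ ·) atTop
      (fun n : ℕ => (windowCount B n : ℝ) / (2 * n + 1)) :=
    isBoundedUnder_of ⟨1, fun n => (windowCount_div_mem_Icc B n).2⟩
  refine le_limsup_of_frequently_le ?_ hbdd
  exact (h.and_eventually (he.eventually (eventually_gt_nhds hc))).mono
    fun n hn => hn.2.le.trans hn.1

lemma sub_le_mul_upperDensityZ_of_frequently (B : Set ℤ) (T : ℕ) {α β γ : ℝ} (hγ : 0 < γ)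
    (h : ∃ᶠ n : ℕ in atTop, α * (2 * n + 1) ^ 2 ≤
      (2 * (n + T) + 1) * (β * (2 * (n + T) + 1) + γ * windowCount B (n + 2 * T))) :
    α - β ≤ γ * upperDensityZ B := by
  -- for `m = n + 2 * T`, `1 - 2 * ρ m` and `1 - ρ m` are the relative sizes of the windows of
  -- radius `n` and `n + T` inside the one of radius `m`
  set ρ : ℕ → ℝ := fun m => 2 * T / (2 * m + 1)
  set e : ℕ → ℝ := fun m => (α * (1 - 2 * ρ m) ^ 2 - β * (1 - ρ m) ^ 2) / γ
  have hρ : Tendsto ρ atTop (𝓝 0) :=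
    tendsto_const_nhds.div_atTop <| tendsto_atTop_add_const_right _ _ <|
      (tendsto_natCast_atTop_atTop).const_mul_atTop two_pos
  have he : Tendsto e atTop (𝓝 ((α - β) / γ)) := by
    have hcont : Continuous fun r : ℝ => (α * (1 - 2 * r) ^ 2 - β * (1 - r) ^ 2) / γ := by
      fun_prop
    have hlim := (hcont.tendsto 0).comp hρ
    rwa [mul_zero, sub_zero, one_pow, mul_one, mul_one] at hlim
  have hshift : ∀ n : ℕ, α * (2 * n + 1) ^ 2 ≤
      (2 * (n + T) + 1) * (β * (2 * (n + T) + 1) + γ * windowCount B (n + 2 * T)) →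
      e (n + 2 * T) ≤ windowCount B (n + 2 * T) / (2 * ((n + 2 * T : ℕ) : ℝ) + 1) := by
    intro n hn
    have hx : (0 : ℝ) < 2 * ((n + 2 * T : ℕ) : ℝ) + 1 := by positivity
    have hw : (0 : ℝ) ≤ windowCount B (n + 2 * T) := Nat.cast_nonneg _
    simp only [e, ρ]
    rw [div_le_div_iff₀ hγ hx]
    field_simp
    push_cast at hx ⊢
    nlinarith [mul_nonneg hγ.le hw]
  have hfreq := (tendsto_add_atTop_nat (2 * T)).frequently
    (p := fun m => e m ≤ windowCount B m / (2 * m + 1)) (h.mono hshift)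
  have := le_upperDensityZ_of_frequently_le he hfreq
  rwa [div_le_iff₀' hγ] at this

lemma exists_lt_sq_mul_windowCount_le (A : Set ℤ) {M : ℕ} (hM : 2 ≤ M) (t : Fin M → ℤ) {T : ℕ}
    (hT : ∀ i, (t i).natAbs ≤ T) (n : ℕ) :
    ∃ i j, i < j ∧ (M * windowCount A n) ^ 2 ≤
      (2 * (n + T) + 1) * (M * (2 * (n + T) + 1) +
        M * (M - 1) * windowCount {x | x ∈ A ∧ x + (t j - t i) ∈ A} (n + 2 * T)) := by
  set I := Icc (-((n + T : ℕ) : ℤ)) (n + T : ℕ)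
  obtain ⟨i, j, hij, hcs⟩ :=
    exists_lt_sq_sum_card_filter_le (by simpa using hM) I (fun k x => x + t k ∈ A)
  refine ⟨i, j, hij, ?_⟩
  have hI : #I = 2 * (n + T) + 1 := by
    rw [Int.card_Icc]
    omega
  have hsum : M * windowCount A n ≤ ∑ k, #{x ∈ I | x + t k ∈ A} := by
    have := sum_le_sum fun k (_ : k ∈ univ) => windowCount_le_card_filter_add_mem A n T (hT k)
    rwa [sum_const, card_univ, Fintype.card_fin, smul_eq_mul] at this
  have hpair := card_filter_add_mem_and_le_windowCount A (n + T) T (hT i) (t j)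
  rw [Fintype.card_fin, hI] at hcs
  rw [add_assoc, ← two_mul] at hpair
  calc (M * windowCount A n) ^ 2 ≤ (∑ k, #{x ∈ I | x + t k ∈ A}) ^ 2 := by gcongr
    _ ≤ _ := hcs
    _ ≤ _ := by gcongr

theorem exists_lt_mul_sq_sub_one_le_upperDensityZ (A : Set ℤ) {δ : ℝ} (hδ₀ : 0 ≤ δ)
    (hδ : δ < upperDensityZ A) {M : ℕ} (hM : 2 ≤ M) (t : Fin M → ℤ) :
    ∃ i j, i < j ∧
      M * δ ^ 2 - 1 ≤ (M - 1) * upperDensityZ {x | x ∈ A ∧ x + (t j - t i) ∈ A} := by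
  obtain ⟨T, hT⟩ : ∃ T : ℕ, ∀ i, (t i).natAbs ≤ T :=
    ⟨univ.sup fun i => (t i).natAbs, fun i => le_sup (f := fun i => (t i).natAbs) (mem_univ i)⟩
  have hM₁ : (1 : ℝ) ≤ M - 1 := by
    have : (2 : ℝ) ≤ M := by exact_mod_cast hM
    linarith
  have hfreq : ∃ᶠ n : ℕ in atTop, ∃ i j, i < j ∧
      ((M : ℝ) ^ 2 * δ ^ 2) * (2 * n + 1) ^ 2 ≤ (2 * (n + T) + 1) * (M * (2 * (n + T) + 1) +
        M * (M - 1) * windowCount {x | x ∈ A ∧ x + (t j - t i) ∈ A} (n + 2 * T)) := by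
    refine (frequently_lt_windowCount hδ).mono fun n hn => ?_
    obtain ⟨i, j, hij, hle⟩ := exists_lt_sq_mul_windowCount_le A hM t hT n
    refine ⟨i, j, hij, ?_⟩
    have hle' : ((M : ℝ) * windowCount A n) ^ 2 ≤ (2 * (n + T) + 1) * (M * (2 * (n + T) + 1) +
        M * (M - 1) * windowCount {x | x ∈ A ∧ x + (t j - t i) ∈ A} (n + 2 * T)) := by
      have h1 : 1 ≤ M := by omega
      exact_mod_cast hle
    calc ((M : ℝ) ^ 2 * δ ^ 2) * (2 * n + 1) ^ 2 = (M * (δ * (2 * n + 1))) ^ 2 := by ring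
      _ ≤ ((M : ℝ) * windowCount A n) ^ 2 := by gcongr
      _ ≤ _ := hle'
  simp only [frequently_exists, frequently_and_distrib_left] at hfreq
  obtain ⟨i, j, hij, hfreq⟩ := hfreq
  refine ⟨i, j, hij, ?_⟩
  have := sub_le_mul_upperDensityZ_of_frequently _ T (by positivity) hfreq
  nlinarith

lemma exists_finset_add_cover_of_forall_exists_sub_mem {G : Type*} [AddGroup G] {F : Set G}
    (hF : ∀ t : ℕ → G, ∃ i j, i < j ∧ t j - t i ∈ F) :
    ∃ R : Finset G, ∀ n, ∃ f ∈ F, ∃ r ∈ R, n = f + r := by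
  by_contra! hR
  choose g hg using hR
  -- greedily pick `t k = g (R k)` outside `F + R k`, where `R k = {t 0, …, t (k-1)}`
  let R : ℕ → Finset G := fun k => Nat.rec ∅ (fun _ s => insert (g s) s) k
  have hRmono : Monotone R := monotone_nat_of_le_succ fun k => subset_insert _ _
  obtain ⟨i, j, hij, hmem⟩ := hF fun k => g (R k)
  exact hg (R j) _ hmem (g (R i)) (hRmono hij (mem_insert_self _ _)) (sub_add_cancel _ _).symm

theorem stmt0 (A : Set ℤ) (δ ε : ℝ) (hδ : δ = upperDensityZ A) (hδpos : 0 < δ)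
    (hε : ε ∈ Set.Ioo (0:ℝ) 1) :
    ∃ R : Finset ℤ, ∀ n : ℤ,
      ∃ f ∈ {k : ℤ | (1 - ε) * δ ^ 2 < upperDensityZ {x : ℤ | x ∈ A ∧ x + k ∈ A}},
        ∃ r ∈ R, n = f + r := by
  obtain ⟨hε₀, hε₁⟩ := hε
  obtain ⟨M, hM⟩ := exists_nat_gt (2 / (ε * δ ^ 2))
  rw [div_lt_iff₀ (by positivity)] at hM
  apply exists_finset_add_cover_of_forall_exists_sub_mem
  intro t
  obtain ⟨i, j, hij, hd⟩ := exists_lt_mul_sq_sub_one_le_upperDensityZ A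
    (δ := (1 - ε / 4) * δ) (by nlinarith) (by nlinarith) (M := M + 2) (by omega) fun k => t k
  refine ⟨i, j, hij, ?_⟩
  set d := upperDensityZ {x | x ∈ A ∧ x + (t j - t i) ∈ A}
  have hsq : (1 - ε / 2) * δ ^ 2 ≤ ((1 - ε / 4) * δ) ^ 2 := by nlinarith
  have hlt : ((M : ℝ) + 1) * ((1 - ε) * δ ^ 2) < (M + 1) * d := by
    push_cast at hd
    nlinarith
  exact lt_of_mul_lt_mul_left hlt (by positivity)
end

section
/- Let A ⊆ ℤ have upper density δ > 0 and ε ∈ (0,1). If R ⊆ ℤ is a finite set such that for all distinct k, l ∈ R the upper density (along a fixed subsequence (m_i) on which all densities η_j = lim #B_j(m_i)/(2m_i+1) exist) satisfies η_{k-l} ≤ (1-ε)δ², then #R ≤ (1 - δ(1-ε))/(δε). -/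
open Filter Topology
open scoped Classical ENNReal

/-!
Let `N x = hits A R x` count the `k ∈ R` with `x + k ∈ A`. On the window `[-n, n]`,
`∑ N ≈ #R · #A(n)` and `∑ N² = ∑_{k,l} #{x | x + k, x + l ∈ A} ≈ ∑_{k,l} #B_{k-l}(n)`, with
boundary errors of size `O(∑ |k|)` that vanish after normalising by `2n + 1`. Cauchy–Schwarz
`(∑ N)² ≤ (2n + 1) ∑ N²` gives, in the limit along `(m i)`,
`(#R δ)² ≤ ∑_{k,l} η (k - l) ≤ #R δ + #R (#R - 1)(1 - ε) δ²`, as `η 0 = δ`; solving this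
quadratic inequality for `#R` gives the bound.
-/

open Finset

noncomputable def windowDensity (P : ℤ → Prop) [DecidablePred P] (n : ℕ) : ℝ :=
  (((Icc (-(n : ℤ)) n).filter P).card : ℝ) / (2 * n + 1)

lemma windowDensity_nonneg (P : ℤ → Prop) [DecidablePred P] (n : ℕ) :
    0 ≤ windowDensity P n := by
  unfold windowDensity; positivity

lemma card_Icc_neg_self (n : ℕ) : (Icc (-(n : ℤ)) n).card = 2 * n + 1 := by
  rw [Int.card_Icc]; omega

lemma windowDensity_le_one (P : ℤ → Prop) [DecidablePred P] (n : ℕ) :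
    windowDensity P n ≤ 1 := by
  rw [windowDensity, div_le_one (by positivity)]
  calc (((Icc (-(n : ℤ)) n).filter P).card : ℝ) ≤ (Icc (-(n : ℤ)) n).card := by
        exact_mod_cast card_filter_le _ _
    _ = 2 * n + 1 := by rw [card_Icc_neg_self]; push_cast; ring

lemma card_filter_Icc_add_le (P : ℤ → Prop) [DecidablePred P] (a b k : ℤ) :
    ((Icc a b).filter (fun x => P (x + k))).card ≤ ((Icc a b).filter P).card + k.natAbs := by
  have hsub : ((Icc a b).filter (fun x => P (x + k))).image (· + k) ⊆
      (Icc a b).filter P ∪ (Icc (a + k) (a - 1) ∪ Icc (b + 1) (b + k)) := by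
    intro y hy
    simp only [mem_image, mem_filter, mem_Icc] at hy
    obtain ⟨x, ⟨hx, hP⟩, rfl⟩ := hy
    simp only [mem_union, mem_filter, mem_Icc]
    by_cases h : a ≤ x + k ∧ x + k ≤ b
    · exact Or.inl ⟨h, hP⟩
    · right; omega
  calc ((Icc a b).filter (fun x => P (x + k))).card
      = (((Icc a b).filter (fun x => P (x + k))).image (· + k)).card :=
        (card_image_of_injective _ (add_left_injective k)).symm
    _ ≤ ((Icc a b).filter P).card + ((Icc (a + k) (a - 1)).card + (Icc (b + 1) (b + k)).card) :=
        (card_le_card hsub).trans <|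
          (card_union_le _ _).trans (Nat.add_le_add_left (card_union_le _ _) _)
    _ = ((Icc a b).filter P).card + k.natAbs := by rw [Int.card_Icc, Int.card_Icc]; omega

lemma card_filter_Icc_le_add (P : ℤ → Prop) [DecidablePred P] (a b k : ℤ) :
    ((Icc a b).filter P).card ≤ ((Icc a b).filter (fun x => P (x + k))).card + k.natAbs := by
  simpa using card_filter_Icc_add_le (fun y => P (y + k)) a b (-k)

noncomputable def hits (A : Set ℤ) (R : Finset ℤ) (x : ℤ) : ℕ :=
  (R.filter (fun k => x + k ∈ A)).card

section Hits

variable (A : Set ℤ) (R : Finset ℤ)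

lemma sum_hits (s : Finset ℤ) :
    ∑ x ∈ s, hits A R x = ∑ k ∈ R, (s.filter (fun x => x + k ∈ A)).card := by
  simp only [hits, card_filter]
  exact sum_comm

lemma sum_hits_sq (s : Finset ℤ) :
    ∑ x ∈ s, hits A R x ^ 2 =
      ∑ k ∈ R, ∑ l ∈ R, (s.filter (fun x => x + k ∈ A ∧ x + l ∈ A)).card := by
  simp only [hits, card_filter, sq, sum_mul_sum, ite_zero_mul_ite_zero, mul_one]
  rw [sum_comm]
  exact sum_congr rfl fun k _ => sum_comm

lemma card_mul_card_filter_Icc_le (a b : ℤ) :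
    R.card * ((Icc a b).filter (· ∈ A)).card ≤
      ∑ x ∈ Icc a b, hits A R x + ∑ k ∈ R, k.natAbs := by
  calc R.card * ((Icc a b).filter (· ∈ A)).card
      = ∑ _k ∈ R, ((Icc a b).filter (· ∈ A)).card := by rw [sum_const, smul_eq_mul]
    _ ≤ ∑ k ∈ R, (((Icc a b).filter (fun x => x + k ∈ A)).card + k.natAbs) :=
        sum_le_sum fun k _ => card_filter_Icc_le_add (· ∈ A) a b k
    _ = ∑ x ∈ Icc a b, hits A R x + ∑ k ∈ R, k.natAbs := by rw [sum_add_distrib, sum_hits]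

lemma sum_hits_sq_Icc_le (a b : ℤ) :
    ∑ x ∈ Icc a b, hits A R x ^ 2 ≤
      ∑ k ∈ R, ∑ l ∈ R, ((Icc a b).filter (fun x => x ∈ A ∧ x + (k - l) ∈ A)).card +
        R.card * ∑ l ∈ R, l.natAbs := by
  rw [sum_hits_sq]
  calc ∑ k ∈ R, ∑ l ∈ R, ((Icc a b).filter (fun x => x + k ∈ A ∧ x + l ∈ A)).card
      ≤ ∑ k ∈ R, ∑ l ∈ R,
          (((Icc a b).filter (fun x => x ∈ A ∧ x + (k - l) ∈ A)).card + l.natAbs) := by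
        refine sum_le_sum fun k _ => sum_le_sum fun l _ => ?_
        refine le_trans (card_le_card fun x hx => ?_)
          (card_filter_Icc_add_le (fun y => y ∈ A ∧ y + (k - l) ∈ A) a b l)
        simp only [mem_filter] at hx ⊢
        exact ⟨hx.1, hx.2.2, by simpa using hx.2.1⟩
    _ = _ := by simp only [sum_add_distrib, sum_const, smul_eq_mul]

end Hits

lemma card_mul_windowDensity_sub_le_sqrt (A : Set ℤ) (R : Finset ℤ) (n : ℕ) :
    R.card * windowDensity (· ∈ A) n - (∑ k ∈ R, k.natAbs : ℕ) / (2 * n + 1) ≤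
      √(∑ k ∈ R, ∑ l ∈ R, windowDensity (fun x => x ∈ A ∧ x + (k - l) ∈ A) n +
        R.card * (∑ k ∈ R, k.natAbs : ℕ) / (2 * n + 1)) := by
  have hlow : (R.card : ℝ) * ((Icc (-(n : ℤ)) n).filter (· ∈ A)).card ≤
      ((∑ x ∈ Icc (-(n : ℤ)) n, hits A R x : ℕ) : ℝ) + (∑ k ∈ R, k.natAbs : ℕ) := by
    exact_mod_cast card_mul_card_filter_Icc_le A R (-(n : ℤ)) n
  have hupp : ((∑ x ∈ Icc (-(n : ℤ)) n, hits A R x ^ 2 : ℕ) : ℝ) ≤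
      ∑ k ∈ R, ∑ l ∈ R,
        (((Icc (-(n : ℤ)) n).filter (fun x => x ∈ A ∧ x + (k - l) ∈ A)).card : ℝ) +
      R.card * (∑ k ∈ R, k.natAbs : ℕ) := by
    exact_mod_cast sum_hits_sq_Icc_le A R (-(n : ℤ)) n
  have hcauchySchwarz :=
    sq_sum_le_card_mul_sum_sq (s := Icc (-(n : ℤ)) n) (f := fun x => (hits A R x : ℝ))
  rw [card_Icc_neg_self] at hcauchySchwarz
  simp only [windowDensity, ← sum_div, mul_div_assoc', div_sub_div_same, ← add_div]
  set c : ℝ := 2 * n + 1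
  have hc : 0 < c := by positivity
  set S : ℝ := ((∑ x ∈ Icc (-(n : ℤ)) n, hits A R x : ℕ) : ℝ)
  set Q : ℝ := ((∑ x ∈ Icc (-(n : ℤ)) n, hits A R x ^ 2 : ℕ) : ℝ)
  have hSQ : (S / c) ^ 2 ≤ Q / c := by
    rw [div_pow, div_le_div_iff₀ (by positivity) hc]
    have : S ^ 2 ≤ c * Q := by simpa [S, Q, c] using hcauchySchwarz
    nlinarith
  calc _ ≤ S / c := by gcongr; linarith
    _ ≤ _ := Real.le_sqrt_of_sq_le (hSQ.trans (by gcongr))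

lemma sq_le_sum_sum_of_tendsto (A : Set ℤ) (R : Finset ℤ) {m : ℕ → ℕ}
    (hm : Tendsto m atTop atTop) {δ : ℝ}
    (hδ : Tendsto (fun i => windowDensity (· ∈ A) (m i)) atTop (𝓝 δ)) {η : ℤ → ℝ}
    (hη : ∀ k, Tendsto (fun i => windowDensity (fun x => x ∈ A ∧ x + k ∈ A) (m i)) atTop
      (𝓝 (η k))) :
    (R.card * δ) ^ 2 ≤ ∑ k ∈ R, ∑ l ∈ R, η (k - l) := by
  have herr : ∀ K : ℝ, Tendsto (fun i => K / (2 * (m i : ℝ) + 1)) atTop (𝓝 0) := fun K =>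
    tendsto_const_nhds.div_atTop <| tendsto_atTop_add_const_right _ 1 <|
      (tendsto_natCast_atTop_atTop.comp hm).const_mul_atTop two_pos
  have hu := (hδ.const_mul (R.card : ℝ)).sub (herr (∑ k ∈ R, k.natAbs : ℕ))
  have hv := (tendsto_finsetSum R fun k _ => tendsto_finsetSum R fun l _ => hη (k - l)).add
    (herr (R.card * (∑ k ∈ R, k.natAbs : ℕ)))
  rw [sub_zero] at hu
  rw [add_zero] at hv
  have hδ0 : 0 ≤ δ := ge_of_tendsto' hδ fun i => windowDensity_nonneg _ _
  have hη0 : 0 ≤ ∑ k ∈ R, ∑ l ∈ R, η (k - l) :=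
    sum_nonneg fun k _ => sum_nonneg fun l _ =>
      ge_of_tendsto' (hη (k - l)) fun i => windowDensity_nonneg _ _
  have hle := le_of_tendsto_of_tendsto' hu hv.sqrt fun i => by
    simpa only [mul_div_assoc] using card_mul_windowDensity_sub_le_sqrt A R (m i)
  exact (Real.le_sqrt (by positivity) hη0).mp hle

lemma sum_sum_sub_le (R : Finset ℤ) (f : ℤ → ℝ) {M : ℝ}
    (hf : ∀ k ∈ R, ∀ l ∈ R, k ≠ l → f (k - l) ≤ M) :
    ∑ k ∈ R, ∑ l ∈ R, f (k - l) ≤ R.card * f 0 + R.card * (R.card - 1) * M := by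
  have hrow : ∀ k ∈ R, ∑ l ∈ R, f (k - l) ≤ f 0 + (R.card - 1) * M := by
    intro k hk
    rw [← add_sum_erase R _ hk, sub_self]
    have := sum_le_card_nsmul (R.erase k) (fun l => f (k - l)) M fun l hl =>
      hf k hk l (mem_of_mem_erase hl) (ne_of_mem_erase hl).symm
    rw [card_erase_of_mem hk, nsmul_eq_mul, Nat.cast_sub (card_pos.mpr ⟨k, hk⟩)] at this
    push_cast at this
    linarith
  calc ∑ k ∈ R, ∑ l ∈ R, f (k - l) ≤ ∑ _k ∈ R, (f 0 + (R.card - 1) * M) := sum_le_sum hrow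
    _ = _ := by rw [sum_const, nsmul_eq_mul]; ring

lemma le_one_sub_mul_div_of_sq_le {r δ ε : ℝ} (hr : 0 ≤ r) (hδ : 0 < δ) (hδ1 : δ ≤ 1)
    (hε : 0 < ε) (h : (r * δ) ^ 2 ≤ r * δ + r * (r - 1) * ((1 - ε) * δ ^ 2)) :
    r ≤ (1 - δ * (1 - ε)) / (δ * ε) := by
  rw [le_div_iff₀ (by positivity)]
  rcases hr.eq_or_lt with rfl | hr
  · nlinarith
  · have : r * δ * (r * δ * ε + δ * (1 - ε) - 1) ≤ 0 := by nlinarith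
    nlinarith [mul_pos hr hδ]

theorem stmt1_general (A : Set ℤ) (δ ε : ℝ) (hδpos : 0 < δ) (hε : ε ∈ Set.Ioo (0:ℝ) 1)
    (m : ℕ → ℕ) (hm : StrictMono m)
    (hδ : Tendsto
      (fun i : ℕ => (((Finset.Icc (-(m i : ℤ)) (m i : ℤ)).filter (· ∈ A)).card : ℝ) / (2 * (m i) + 1))
      atTop (nhds δ))
    (η : ℤ → ℝ)
    (hη : ∀ k : ℤ, Tendsto
      (fun i : ℕ => (((Finset.Icc (-(m i : ℤ)) (m i : ℤ)).filter
          (fun x : ℤ => x ∈ A ∧ x + k ∈ A)).card : ℝ) / (2 * (m i) + 1))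
      atTop (nhds (η k)))
    (R : Finset ℤ)
    (hR : ∀ k ∈ R, ∀ l ∈ R, k ≠ l → η (k - l) ≤ (1 - ε) * δ ^ 2) :
    (R.card : ℝ) ≤ (1 - δ * (1 - ε)) / (δ * ε) := by
  have hη0 : η 0 = δ := tendsto_nhds_unique (by simpa using hη 0) hδ
  have hδ1 : δ ≤ 1 := le_of_tendsto' hδ fun i => windowDensity_le_one _ _
  have hmoment := sq_le_sum_sum_of_tendsto A R hm.tendsto_atTop hδ hη
  have hpairs := sum_sum_sub_le R η hR
  rw [hη0] at hpairs
  exact le_one_sub_mul_div_of_sq_le (Nat.cast_nonneg _) hδpos hδ1 hε.1 (hmoment.trans hpairs)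

theorem stmt1 (A : Set ℤ) (δ ε : ℝ) (hδpos : 0 < δ) (hε : ε ∈ Set.Ioo (0:ℝ) 1)
    (hδup : δ = upperDensityZ A)
    (m : ℕ → ℕ) (hm : StrictMono m)
    (hδ : Tendsto
      (fun i : ℕ => (((Finset.Icc (-(m i : ℤ)) (m i : ℤ)).filter (· ∈ A)).card : ℝ) / (2 * (m i) + 1))
      atTop (nhds δ))
    (η : ℤ → ℝ)
    (hη : ∀ k : ℤ, Tendsto
      (fun i : ℕ => (((Finset.Icc (-(m i : ℤ)) (m i : ℤ)).filter
          (fun x : ℤ => x ∈ A ∧ x + k ∈ A)).card : ℝ) / (2 * (m i) + 1))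
      atTop (nhds (η k)))
    (R : Finset ℤ)
    (hR : ∀ k ∈ R, ∀ l ∈ R, k ≠ l → η (k - l) ≤ (1 - ε) * δ ^ 2) :
    (R.card : ℝ) ≤ (1 - δ * (1 - ε)) / (δ * ε) :=
  stmt1_general A δ ε hδpos hε m hm hδ η hη R hR
end

section
/- Let p ∈ [1,∞) and let w = (w_n)_{n≥1} be a bounded sequence of positive reals. If x ∈ ℓ^p(ℤ₊) and A ⊆ ℤ₊ is a set such that ‖B_w^n x − e_0‖_p ≤ 1/2 for all n ∈ A, then for every n ∈ A one has Σ_{m∈A, m>n} 1/(w_1⋯w_{m-n})^p ≤ 1, where B_w is the unilateral backward weighted shift. -/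
open Filter Topology
open scoped Classical ENNReal

/-!
Reading off coordinates of `B_w^n x` gives `(B_w^n x)_k · w_1⋯w_k = w_1⋯w_{k+n} · x_{k+n}`.
At `k = 0` the hypothesis `‖B_w^m x - e_0‖_p ≤ 1/2` forces `|w_1⋯w_m x_m| ≥ 1/2` for `m ∈ A`,
so for `n < m` in `A` the coordinate `m - n` of `B_w^n x - e_0` has size at least
`(1/2) / (w_1⋯w_{m-n})`. Summing these `p`-th powers over the distinct coordinates `m - n`
is bounded by `‖B_w^n x - e_0‖_p^p ≤ (1/2)^p`.
-/

def weightedShift {R : Type*} [Mul R] (w y : ℕ → R) : ℕ → R :=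
  fun m => w (m + 1) * y (m + 1)

theorem weightedShift_iterate_mul_prod {R : Type*} [CommMonoid R] (w y : ℕ → R) (n k : ℕ) :
    (weightedShift w)^[n] y k * ∏ i ∈ Finset.Icc 1 k, w i =
      (∏ i ∈ Finset.Icc 1 (k + n), w i) * y (k + n) := by
  induction n generalizing y with
  | zero => exact mul_comm _ _
  | succ n ih =>
    rw [Function.iterate_succ_apply, ih, ← add_assoc,
      Finset.prod_Icc_succ_top (by omega), weightedShift, mul_assoc]

theorem weightedShift_iterate_apply_zero {R : Type*} [CommMonoid R] (w y : ℕ → R) (n : ℕ) :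
    (weightedShift w)^[n] y 0 = (∏ i ∈ Finset.Icc 1 n, w i) * y n := by
  simpa using weightedShift_iterate_mul_prod w y n 0

theorem div_prod_le_abs_weightedShift_iterate {w : ℕ → ℝ} (hw : ∀ n, 0 < w n) (y : ℕ → ℝ)
    {c : ℝ} {n k : ℕ} (h : c ≤ |(∏ i ∈ Finset.Icc 1 (k + n), w i) * y (k + n)|) :
    c / ∏ i ∈ Finset.Icc 1 k, w i ≤ |(weightedShift w)^[n] y k| := by
  have hpos : 0 < ∏ i ∈ Finset.Icc 1 k, w i := Finset.prod_pos fun i _ => hw i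
  rwa [div_le_iff₀ hpos, ← abs_of_pos hpos, ← abs_mul, weightedShift_iterate_mul_prod]

theorem abs_le_of_tsum_ofReal_rpow_le {f : ℕ → ℝ} {c p : ℝ} (hc : 0 ≤ c) (hp : 0 < p)
    (h : ∑' k, ENNReal.ofReal (|f k| ^ p) ≤ ENNReal.ofReal (c ^ p)) (k : ℕ) : |f k| ≤ c := by
  have hk := (ENNReal.le_tsum k).trans h
  rw [ENNReal.ofReal_le_ofReal_iff (by positivity)] at hk
  exact (Real.rpow_le_rpow_iff (abs_nonneg _) hc hp).mp hk

theorem half_le_abs_of_abs_sub_one_le {a : ℝ} (h : |a - 1| ≤ 1 / 2) : 1 / 2 ≤ |a| := by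
  have := abs_sub_abs_le_abs_sub 1 a
  rw [abs_sub_comm, abs_one] at this
  linarith

theorem ENNReal.tsum_le_one_of_mul_le_comp {ι κ : Type*} {c : ℝ≥0∞} (hc₀ : c ≠ 0) (hc : c ≠ ⊤)
    {f : κ → ℝ≥0∞} {g : ι → ℝ≥0∞} {e : ι → κ} (he : Function.Injective e)
    (hgf : ∀ i, c * g i ≤ f (e i)) (hf : ∑' k, f k ≤ c) : ∑' i, g i ≤ 1 := by
  rw [← ENNReal.mul_le_mul_iff_right hc₀ hc, mul_one, ← ENNReal.tsum_mul_left]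
  exact (ENNReal.tsum_le_tsum hgf).trans ((ENNReal.tsum_comp_le_tsum_of_injective he f).trans hf)

theorem stmt4_general (p : ℝ) (hp : 1 ≤ p)
    (w : ℕ → ℝ) (hw : ∀ n, 0 < w n)
    (x : ℕ → ℝ)
    (A : Set ℕ)
    (hA : ∀ n ∈ A,
      (∑' k : ℕ, ENNReal.ofReal
          (|(fun (y : ℕ → ℝ) (m : ℕ) => w (m+1) * y (m+1))^[n] x k
              - (if k = 0 then (1:ℝ) else 0)| ^ p))
        ≤ ENNReal.ofReal ((1/2 : ℝ) ^ p)) :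
    ∀ n ∈ A, ∑' m : {m : ℕ | m ∈ A ∧ n < m},
        ENNReal.ofReal (1 / (∏ i ∈ Finset.Icc 1 ((m : ℕ) - n), w i) ^ p) ≤ 1 := by
  have hp0 : 0 < p := by linarith
  change ∀ n ∈ A, ∑' k, ENNReal.ofReal (|(weightedShift w)^[n] x k - _| ^ p) ≤ _ at hA
  have hxA : ∀ m ∈ A, 1 / 2 ≤ |(∏ i ∈ Finset.Icc 1 m, w i) * x m| := fun m hm =>
    half_le_abs_of_abs_sub_one_le <| by
      simpa [weightedShift_iterate_apply_zero] using
        abs_le_of_tsum_ofReal_rpow_le (by norm_num) hp0 (hA m hm) 0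
  intro n hn
  have hinj : Function.Injective fun m : {m : ℕ | m ∈ A ∧ n < m} => (m : ℕ) - n := by
    intro a b hab
    have := a.2.2
    have := b.2.2
    exact Subtype.ext (by simp only at hab; omega)
  refine ENNReal.tsum_le_one_of_mul_le_comp (by positivity) ENNReal.ofReal_ne_top hinj
    (fun ⟨m, hmA, hnm⟩ => ?_) (hA n hn)
  obtain ⟨k, rfl⟩ : ∃ k, m = k + n := ⟨m - n, by omega⟩
  have hk : k ≠ 0 := by omega
  have hprod : 0 < ∏ i ∈ Finset.Icc 1 k, w i := Finset.prod_pos fun i _ => hw i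
  simp only [Nat.add_sub_cancel, if_neg hk, sub_zero]
  rw [← ENNReal.ofReal_mul (by positivity), mul_one_div, ← Real.div_rpow (by norm_num) hprod.le]
  exact ENNReal.ofReal_le_ofReal <| Real.rpow_le_rpow (by positivity)
    (div_prod_le_abs_weightedShift_iterate hw x (hxA _ hmA)) hp0.le

theorem stmt4 (p : ℝ) (hp : 1 ≤ p)
    (w : ℕ → ℝ) (hw : ∀ n, 0 < w n) (C : ℝ) (hC : ∀ n, w n ≤ C)
    (x : ℕ → ℝ) (hx : Summable fun k : ℕ => |x k| ^ p)
    (A : Set ℕ)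
    (hA : ∀ n ∈ A,
      (∑' k : ℕ, ENNReal.ofReal
          (|(fun (y : ℕ → ℝ) (m : ℕ) => w (m+1) * y (m+1))^[n] x k
              - (if k = 0 then (1:ℝ) else 0)| ^ p))
        ≤ ENNReal.ofReal ((1/2 : ℝ) ^ p)) :
    ∀ n ∈ A, ∑' m : {m : ℕ | m ∈ A ∧ n < m},
        ENNReal.ofReal (1 / (∏ i ∈ Finset.Icc 1 ((m : ℕ) - n), w i) ^ p) ≤ 1 :=
  stmt4_general p hp w hw x A hA
end

section
/- Let p ∈ [1,∞) and let w = (w_n)_{n≥1} be a bounded sequence of positive reals. If the unilateral weighted backward shift B_w is U-frequently hypercyclic on ℓ^p(ℤ₊), then Σ_{n≥1} 1/(w_1⋯w_n)^p < +∞. -/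
open Filter Topology
open scoped Classical ENNReal

/-!
Let `x` be a U-frequently hypercyclic vector, `E` the set of `n` with `B_w^n x` within `1` of
`2 e₀`, and `W_d = w_1 ⋯ w_d`. Coordinate `0` gives `W_n x_n ≥ 1` for `n ∈ E`, and then
coordinate `d` of `B_w^m x - 2 e₀` shows `∑_{d > 0, m + d ∈ E} W_d^{-p} ≤ 1` for every `m ∈ E`.
Averaging over `m ∈ E` along windows realising the upper density `δ > 0` (an ultrafilter limit
of Cesàro means) bounds `∑_d W_d^{-p} ρ(d)`, where `ρ(d)` is the density of `E ∩ (E - d)`.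
A Cauchy–Schwarz argument in the style of Khintchine shows that the `d` with
`ρ(d) ≥ δ² / 2` have bounded gaps, and `W_d^{-p} ≤ C^p W_{d+1}^{-p}` spreads the bound from
these `d` to all `d`.
-/

open Finset

noncomputable def cesaroMean (x : ℕ → ℝ) (n : ℕ) : ℝ :=
  (∑ i ∈ range (n + 1), x i) / (n + 1)

section CesaroMean

variable {x y : ℕ → ℝ}

theorem cesaroMean_sum {ι : Type*} (s : Finset ι) (f : ι → ℕ → ℝ) (n : ℕ) :
    cesaroMean (fun i => ∑ j ∈ s, f j i) n = ∑ j ∈ s, cesaroMean (f j) n := by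
  simp only [cesaroMean, Finset.sum_comm (s := range (n + 1)), Finset.sum_div]

theorem cesaroMean_const_mul (c : ℝ) (x : ℕ → ℝ) (n : ℕ) :
    cesaroMean (fun i => c * x i) n = c * cesaroMean x n := by
  simp only [cesaroMean, ← Finset.mul_sum, mul_div_assoc]

theorem cesaroMean_mono (h : ∀ i, x i ≤ y i) (n : ℕ) : cesaroMean x n ≤ cesaroMean y n :=
  div_le_div_of_nonneg_right (sum_le_sum fun i _ => h i) (by positivity)

theorem sq_cesaroMean_le (x : ℕ → ℝ) (n : ℕ) :
    cesaroMean x n ^ 2 ≤ cesaroMean (fun i => x i ^ 2) n := by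
  have hn : (0 : ℝ) < n + 1 := by positivity
  have := sq_sum_le_card_mul_sum_sq (s := range (n + 1)) (f := x)
  rw [card_range, Nat.cast_succ] at this
  rw [cesaroMean, cesaroMean, div_pow, div_le_div_iff₀ (by positivity) hn]
  nlinarith

theorem cesaroMean_indicator (E : Set ℕ) (n : ℕ) :
    cesaroMean (E.indicator 1) n = #{i ∈ range (n + 1) | i ∈ E} / (n + 1) := by
  simp [cesaroMean, Set.indicator_apply, Finset.sum_boole]

theorem abs_cesaroMean_le {M : ℝ} (hx : ∀ i, |x i| ≤ M) (n : ℕ) : |cesaroMean x n| ≤ M := by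
  rw [cesaroMean, abs_div, abs_of_pos (by positivity : (0 : ℝ) < n + 1),
    div_le_iff₀ (by positivity)]
  calc |∑ i ∈ range (n + 1), x i| ≤ ∑ i ∈ range (n + 1), |x i| := abs_sum_le_sum_abs _ _
    _ ≤ ∑ _i ∈ range (n + 1), M := sum_le_sum fun i _ => hx i
    _ = M * (n + 1) := by simp [mul_comm]

theorem cesaroMean_comp_succ_sub (x : ℕ → ℝ) (n : ℕ) :
    cesaroMean (fun i => x (i + 1)) n - cesaroMean x n = (x (n + 1) - x 0) / (n + 1) := by
  have h := (sum_range_succ' x (n + 1)).symm.trans (sum_range_succ x (n + 1))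
  simp only [cesaroMean, ← sub_div]
  congr 1
  linarith

theorem tendsto_cesaroMean_comp_succ_sub {M : ℝ} (hx : ∀ i, |x i| ≤ M) :
    Tendsto (fun n => cesaroMean (fun i => x (i + 1)) n - cesaroMean x n) atTop (𝓝 0) := by
  simp only [cesaroMean_comp_succ_sub]
  refine squeeze_zero_norm (fun n => ?_)
    (by simpa using tendsto_one_div_add_atTop_nhds_zero_nat.const_mul (2 * M))
  rw [Real.norm_eq_abs, abs_div, abs_of_pos (by positivity : (0 : ℝ) < n + 1), div_eq_mul_inv]
  gcongr
  linarith [abs_sub (x (n + 1)) (x 0), hx (n + 1), hx 0]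

end CesaroMean

theorem abs_indicator_one_le (E : Set ℕ) (n : ℕ) : |E.indicator (1 : ℕ → ℝ) n| ≤ 1 := by
  by_cases hn : n ∈ E <;> simp [hn]

theorem abs_indicator_one_mul_le (E : Set ℕ) (m n : ℕ) :
    |E.indicator (1 : ℕ → ℝ) m * E.indicator 1 n| ≤ 1 := by
  rw [abs_mul]
  exact mul_le_one₀ (abs_indicator_one_le E m) (abs_nonneg _) (abs_indicator_one_le E n)

theorem Filter.Tendsto.cesaroMean_comp_add {x : ℕ → ℝ} {l : Filter ℕ} (hl : l ≤ atTop) {M a : ℝ}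
    (hx : ∀ i, |x i| ≤ M) (h : Tendsto (cesaroMean x) l (𝓝 a)) (b : ℕ) :
    Tendsto (cesaroMean fun i => x (i + b)) l (𝓝 a) := by
  induction b with
  | zero => simpa using h
  | succ b ih =>
    have hstep := tendsto_cesaroMean_comp_succ_sub (x := fun i => x (i + b)) fun i => hx _
    simpa [add_assoc, add_comm 1 b] using ih.add (hstep.mono_left hl)

theorem Ultrafilter.exists_tendsto_of_abs_le {α : Type*} (𝒰 : Ultrafilter α) {f : α → ℝ} {M : ℝ}
    (hf : ∀ a, |f a| ≤ M) : ∃ c, Tendsto f 𝒰 (𝓝 c) := by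
  obtain ⟨c, -, hc⟩ := isCompact_Icc.ultrafilter_le_nhds (𝒰.map f) (by
    rw [Ultrafilter.coe_map, le_principal_iff]
    exact mem_map.2 (univ_mem' fun a => abs_le.1 (hf a)))
  exact ⟨c, hc⟩

theorem exists_card_eq_sub_mem_of_thick {S : Set ℕ}
    (hS : ∀ G, ∃ t, ∀ d, t < d → d ≤ t + G → d ∈ S) (K : ℕ) :
    ∃ B : Finset ℕ, #B = K ∧ ∀ b ∈ B, ∀ b' ∈ B, b < b' → b' - b ∈ S := by
  induction K with
  | zero => exact ⟨∅, rfl, by simp⟩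
  | succ K ih =>
    obtain ⟨B, hcard, hB⟩ := ih
    have hle : ∀ b ∈ B, b ≤ B.sup id := fun b hb => le_sup (f := id) hb
    obtain ⟨t, ht⟩ := hS (B.sup id + 1)
    refine ⟨insert (t + 1 + B.sup id) B, ?_, ?_⟩
    · rw [card_insert_of_notMem fun h => by have := hle _ h; omega, hcard]
    · intro b hb b' hb' hlt
      rw [mem_insert] at hb hb'
      rcases hb with rfl | hb <;> rcases hb' with rfl | hb'
      · omega
      · have := hle _ hb'; omega
      · have := hle _ hb; exact ht _ (by omega) (by omega)
      · exact hB b hb b' hb' hlt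

def HasCorrelations (l : Filter ℕ) (E : Set ℕ) (ρ : ℕ → ℝ) : Prop :=
  ∀ d, Tendsto (cesaroMean fun n => E.indicator 1 n * E.indicator 1 (n + d)) l (𝓝 (ρ d))

namespace HasCorrelations

variable {l : Filter ℕ} {E : Set ℕ} {ρ : ℕ → ℝ}

theorem tendsto_cesaroMean_indicator (hρ : HasCorrelations l E ρ) :
    Tendsto (cesaroMean (E.indicator 1)) l (𝓝 (ρ 0)) := by
  refine (hρ 0).congr fun n => ?_
  congr 1 with i
  by_cases hi : i ∈ E <;> simp [hi]

theorem tendsto_cesaroMean_shift_mul_shift (hρ : HasCorrelations l E ρ) (hl : l ≤ atTop)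
    (b b' : ℕ) :
    Tendsto (cesaroMean fun n => E.indicator 1 (n + b) * E.indicator 1 (n + b')) l
      (𝓝 (ρ (max b b' - min b b'))) := by
  wlog hbb : b ≤ b' generalizing b b'
  · simpa [mul_comm, max_comm, min_comm] using this b' b (le_of_not_ge hbb)
  have := (hρ (b' - b)).cesaroMean_comp_add hl (fun n => abs_indicator_one_mul_le E _ _) b
  rw [max_eq_right hbb, min_eq_left hbb]
  convert this using 4 with n
  congr 1
  omega

theorem sq_card_mul_le [l.NeBot] (hρ : HasCorrelations l E ρ) (hl : l ≤ atTop) {c : ℝ}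
    (hc : 0 ≤ c) (B : Finset ℕ) (hB : ∀ b ∈ B, ∀ b' ∈ B, b < b' → ρ (b' - b) < c) :
    (#B * ρ 0) ^ 2 ≤ #B * ρ 0 + #B ^ 2 * c := by
  set h : ℕ → ℝ := fun n => ∑ b ∈ B, E.indicator 1 (n + b)
  have hmean : Tendsto (cesaroMean h) l (𝓝 (#B * ρ 0)) := by
    have := tendsto_finsetSum B fun b _ =>
      hρ.tendsto_cesaroMean_indicator.cesaroMean_comp_add hl (abs_indicator_one_le E) b
    simpa using this.congr fun n => by simp only [h, cesaroMean_sum]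
  have hsq : Tendsto (cesaroMean fun n => h n ^ 2) l
      (𝓝 (∑ b ∈ B, ∑ b' ∈ B, ρ (max b b' - min b b'))) := by
    have := tendsto_finsetSum B fun b _ => tendsto_finsetSum B fun b' _ =>
      hρ.tendsto_cesaroMean_shift_mul_shift hl b b'
    exact this.congr fun n => by simp only [h, sq, sum_mul_sum, cesaroMean_sum]
  have hrow : ∀ b ∈ B, ∑ b' ∈ B, ρ (max b b' - min b b') ≤ ρ 0 + #B * c := by
    intro b hb
    calc ∑ b' ∈ B, ρ (max b b' - min b b') ≤ ∑ b' ∈ B, ((if b = b' then ρ 0 else 0) + c) := by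
          refine sum_le_sum fun b' hb' => ?_
          rcases lt_trichotomy b b' with hlt | rfl | hlt
          · rw [if_neg hlt.ne, max_eq_right hlt.le, min_eq_left hlt.le]
            linarith [hB b hb b' hb' hlt]
          · simp [hc]
          · rw [if_neg hlt.ne', max_eq_left hlt.le, min_eq_right hlt.le]
            linarith [hB b' hb' b hb hlt]
      _ = ρ 0 + #B * c := by simp [sum_add_distrib, hb]
  calc (#B * ρ 0) ^ 2 ≤ ∑ b ∈ B, ∑ b' ∈ B, ρ (max b b' - min b b') :=
        le_of_tendsto_of_tendsto' (hmean.pow 2) hsq (sq_cesaroMean_le h)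
    _ ≤ ∑ _b ∈ B, (ρ 0 + #B * c) := sum_le_sum hrow
    _ = #B * ρ 0 + #B ^ 2 * c := by simp; ring

theorem exists_bounded_gaps [l.NeBot] (hρ : HasCorrelations l E ρ) (hl : l ≤ atTop)
    (hρ₀ : 0 < ρ 0) : ∃ G, ∀ t, ∃ d, t < d ∧ d ≤ t + G ∧ ρ 0 ^ 2 / 2 ≤ ρ d := by
  -- Otherwise `K > 2 / ρ 0` shifts of `E` with pairwise small correlations contradict
  -- `sq_card_mul_le`.
  by_contra! hthick
  set K := ⌊2 / ρ 0⌋₊ + 1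
  have hK : 2 < K * ρ 0 := by
    rw [← div_lt_iff₀ hρ₀]
    exact_mod_cast Nat.lt_floor_add_one (2 / ρ 0)
  obtain ⟨B, hcard, hB⟩ := exists_card_eq_sub_mem_of_thick hthick K
  have := hρ.sq_card_mul_le hl (by positivity) B hB
  rw [hcard] at this
  nlinarith

theorem sum_mul_le [l.NeBot] (hρ : HasCorrelations l E ρ) {a : ℕ → ℝ} {A : ℝ}
    (hA : ∀ m ∈ E, ∀ D : Finset ℕ, (∀ d ∈ D, 0 < d ∧ m + d ∈ E) → ∑ d ∈ D, a d ≤ A)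
    (D : Finset ℕ) (hD : ∀ d ∈ D, 0 < d) :
    ∑ d ∈ D, a d * ρ d ≤ A * ρ 0 := by
  have hpointwise : ∀ n, ∑ d ∈ D, a d * (E.indicator 1 n * E.indicator 1 (n + d))
      ≤ A * E.indicator 1 n := by
    intro n
    by_cases hn : n ∈ E
    · have := hA n hn {d ∈ D | n + d ∈ E} fun d hd => by
        rw [mem_filter] at hd
        exact ⟨hD d hd.1, hd.2⟩
      simpa [hn, Set.indicator_apply, sum_filter] using this
    · simp [hn]
  have hlhs := tendsto_finsetSum D fun d _ => (hρ d).const_mul (a d)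
  refine le_of_tendsto_of_tendsto' hlhs (hρ.tendsto_cesaroMean_indicator.const_mul A) fun n => ?_
  simpa only [cesaroMean_sum, cesaroMean_const_mul] using cesaroMean_mono hpointwise n

end HasCorrelations

theorem exists_hasCorrelations_of_upperDensity_pos {E : Set ℕ} (hE : 0 < upperDensity E) :
    ∃ 𝒰 : Ultrafilter ℕ, (𝒰 : Filter ℕ) ≤ atTop ∧ ∃ ρ, HasCorrelations 𝒰 E ρ ∧ 0 < ρ 0 := by
  set S := {n | upperDensity E / 2 < cesaroMean (E.indicator 1) n}
  have hS : ∃ᶠ n in atTop, upperDensity E / 2 < cesaroMean (E.indicator 1) n := by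
    simp only [cesaroMean_indicator]
    exact frequently_lt_of_lt_limsup (isCoboundedUnder_le_of_le atTop fun n => by positivity)
      (half_lt_self hE)
  have : (atTop ⊓ 𝓟 S).NeBot := frequently_iff_neBot.1 hS
  set 𝒰 := Ultrafilter.of (atTop ⊓ 𝓟 S)
  have h𝒰 : (𝒰 : Filter ℕ) ≤ atTop ⊓ 𝓟 S := Ultrafilter.of_le _
  choose ρ hρ using fun d => 𝒰.exists_tendsto_of_abs_le
    (abs_cesaroMean_le fun n => abs_indicator_one_mul_le E n (n + d))
  have hρ : HasCorrelations 𝒰 E ρ := hρ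
  refine ⟨𝒰, h𝒰.trans inf_le_left, ρ, hρ, (half_pos hE).trans_le ?_⟩
  refine ge_of_tendsto hρ.tendsto_cesaroMean_indicator ?_
  filter_upwards [h𝒰.trans inf_le_right (mem_principal_self S)] with n hn
  exact hn.le

theorem summable_of_sum_le_of_syndetic {a : ℕ → ℝ} (ha : ∀ d, 0 ≤ a d) {C : ℝ} (hC : 1 ≤ C)
    (hstep : ∀ d, a d ≤ C * a (d + 1)) {P : Set ℕ} {G : ℕ} (hP : ∀ t, ∃ d ∈ P, t < d ∧ d ≤ t + G)
    {A : ℝ} (hA : ∀ D : Finset ℕ, ↑D ⊆ P → ∑ d ∈ D, a d ≤ A) : Summable a := by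
  choose σ hσP hσlt hσle using hP
  have hiter : ∀ d k, a d ≤ C ^ k * a (d + k) := by
    intro d k
    induction k with
    | zero => simp
    | succ k ih =>
      calc a d ≤ C ^ k * (C * a (d + k + 1)) := ih.trans (by gcongr; exact hstep _)
        _ = C ^ (k + 1) * a (d + (k + 1)) := by ring_nf
  have hnext : ∀ t, a (t + 1) ≤ C ^ G * a (σ t) := by
    intro t
    calc a (t + 1) ≤ C ^ (σ t - (t + 1)) * a (σ t) := by
          simpa [Nat.add_sub_cancel' (hσlt t)] using hiter (t + 1) (σ t - (t + 1))
      _ ≤ C ^ G * a (σ t) := by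
          gcongr
          · exact ha _
          · have := hσle t; omega
  have hfiber : ∀ D, ∑ t ∈ range D, a (σ t) ≤ G * A := by
    intro D
    rw [sum_comp]
    calc ∑ s ∈ (range D).image σ, #{t ∈ range D | σ t = s} • a s
        ≤ ∑ s ∈ (range D).image σ, G • a s := by
          refine sum_le_sum fun s _ => nsmul_le_nsmul_left (ha s) ?_
          calc #{t ∈ range D | σ t = s} ≤ #(Ico (s - G) s) := card_le_card fun t ht => by
                rw [mem_filter] at ht
                have := hσlt t; have := hσle t
                rw [mem_Ico]; omega
            _ ≤ G := by rw [Nat.card_Ico]; omega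
      _ ≤ G * A := by
          rw [← smul_sum, nsmul_eq_mul]
          gcongr
          exact hA _ fun s hs => by
            obtain ⟨t, -, rfl⟩ := mem_image.1 hs
            exact hσP t
  refine (summable_nat_add_iff 1).1 <| summable_of_sum_range_le (c := C ^ G * (G * A))
    (fun d => ha _) fun D => ?_
  calc ∑ t ∈ range D, a (t + 1) ≤ ∑ t ∈ range D, C ^ G * a (σ t) := sum_le_sum fun t _ => hnext t
    _ ≤ C ^ G * (G * A) := by
        rw [← mul_sum]
        gcongr
        exact hfiber D

theorem summable_of_upperDensity_pos {E : Set ℕ} (hE : 0 < upperDensity E) {a : ℕ → ℝ}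
    (ha : ∀ d, 0 ≤ a d) {C : ℝ} (hC : 1 ≤ C) (hstep : ∀ d, a d ≤ C * a (d + 1)) {A : ℝ}
    (hA : ∀ m ∈ E, ∀ D : Finset ℕ, (∀ d ∈ D, 0 < d ∧ m + d ∈ E) → ∑ d ∈ D, a d ≤ A) :
    Summable a := by
  obtain ⟨𝒰, h𝒰, ρ, hρ, hρ₀⟩ := exists_hasCorrelations_of_upperDensity_pos hE
  obtain ⟨G, hG⟩ := hρ.exists_bounded_gaps h𝒰 hρ₀
  refine summable_of_sum_le_of_syndetic ha hC hstep (P := {d | 0 < d ∧ ρ 0 ^ 2 / 2 ≤ ρ d})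
    (G := G) (fun t => ?_) (A := A * ρ 0 / (ρ 0 ^ 2 / 2)) fun D hD => ?_
  · obtain ⟨d, htd, hdt, hd⟩ := hG t
    exact ⟨d, ⟨by omega, hd⟩, htd, hdt⟩
  rw [le_div_iff₀ (by positivity), sum_mul]
  exact (sum_le_sum fun d hd => mul_le_mul_of_nonneg_left (hD hd).2 (ha d)).trans
    (hρ.sum_mul_le hA D fun d hd => (hD hd).1)

theorem inv_prod_rpow_le_mul {w : ℕ → ℝ} (hw : ∀ n, 0 < w n) {C : ℝ} (hC : ∀ n, w n ≤ C)
    {q : ℝ} (hq : 0 ≤ q) (d : ℕ) :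
    (∏ i ∈ Ioc 0 d, w i)⁻¹ ^ q ≤ max C 1 ^ q * (∏ i ∈ Ioc 0 (d + 1), w i)⁻¹ ^ q := by
  have hu : ∀ n, 0 < ∏ i ∈ Ioc 0 n, w i := fun n => prod_pos fun i _ => hw i
  rw [← Real.mul_rpow (by positivity) (inv_pos.2 (hu _)).le]
  refine Real.rpow_le_rpow (inv_pos.2 (hu _)).le ?_ hq
  rw [prod_Ioc_succ_top (Nat.zero_le d)]
  calc (∏ i ∈ Ioc 0 d, w i)⁻¹ = w (d + 1) * ((∏ i ∈ Ioc 0 d, w i) * w (d + 1))⁻¹ := by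
        field_simp [(hw (d + 1)).ne']
    _ ≤ max C 1 * ((∏ i ∈ Ioc 0 d, w i) * w (d + 1))⁻¹ := by
        gcongr
        · exact (inv_pos.2 (mul_pos (hu d) (hw _))).le
        · exact (hC _).trans (le_max_left _ _)

def IsWeightedBackwardShift {p : ℝ≥0∞} [Fact (1 ≤ p)] (w : ℕ → ℝ)
    (T : lp (fun _ : ℕ => ℝ) p →L[ℝ] lp (fun _ : ℕ => ℝ) p) : Prop :=
  ∀ (x : lp (fun _ : ℕ => ℝ) p) (k : ℕ), (T x : ∀ _ : ℕ, ℝ) k = w (k + 1) * (x : ∀ _ : ℕ, ℝ) (k + 1)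

namespace IsWeightedBackwardShift

variable {p : ℝ≥0∞} [Fact (1 ≤ p)] {w : ℕ → ℝ}
  {T : lp (fun _ : ℕ => ℝ) p →L[ℝ] lp (fun _ : ℕ => ℝ) p}

theorem pow_apply (hT : IsWeightedBackwardShift w T) (n : ℕ) (x : lp (fun _ : ℕ => ℝ) p) (k : ℕ) :
    ((T ^ n) x : ∀ _ : ℕ, ℝ) k = (∏ i ∈ Ioc k (k + n), w i) * (x : ∀ _ : ℕ, ℝ) (k + n) := by
  induction n generalizing x with
  | zero => simp
  | succ n ih =>
    rw [pow_succ, mul_apply_eq_comp, ih, hT, ← add_assoc,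
      prod_Ioc_succ_top (Nat.le_add_right k n)]
    ring

theorem one_le_prod_mul_apply_of_mem_ball (hT : IsWeightedBackwardShift w T)
    {x : lp (fun _ : ℕ => ℝ) p} {n : ℕ} (hn : (T ^ n) x ∈ Metric.ball (lp.single p 0 2) 1) :
    1 ≤ (∏ i ∈ Ioc 0 n, w i) * (x : ∀ _ : ℕ, ℝ) n := by
  have hp : p ≠ 0 := (zero_lt_one.trans_le Fact.out).ne'
  have h := (lp.norm_apply_le_norm hp _ 0).trans_lt (mem_ball_iff_norm.1 hn)
  rw [lp.coeFn_sub, Pi.sub_apply, lp.single_apply, hT.pow_apply] at h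
  simp only [Pi.single_eq_same, zero_add, Real.norm_eq_abs] at h
  linarith [(abs_lt.1 h).1]

theorem sum_inv_prod_rpow_le (hT : IsWeightedBackwardShift w T) (hw : ∀ n, 0 < w n)
    (hp : p ≠ ⊤) {x : lp (fun _ : ℕ => ℝ) p} {m : ℕ}
    (hm : (T ^ m) x ∈ Metric.ball (lp.single p 0 2) 1) (D : Finset ℕ)
    (hD : ∀ d ∈ D, 0 < d ∧ (T ^ (m + d)) x ∈ Metric.ball (lp.single p 0 2) 1) :
    ∑ d ∈ D, (∏ i ∈ Ioc 0 d, w i)⁻¹ ^ p.toReal ≤ 1 := by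
  have hq : 0 < p.toReal := ENNReal.toReal_pos (zero_lt_one.trans_le Fact.out).ne' hp
  set g := (T ^ m) x - lp.single p 0 2
  have hcoord : ∀ d ∈ D, (∏ i ∈ Ioc 0 d, w i)⁻¹ ≤ ‖(g : ∀ _ : ℕ, ℝ) d‖ := by
    intro d hd
    obtain ⟨hd0, hdm⟩ := hD d hd
    have h1 := hT.one_le_prod_mul_apply_of_mem_ball hdm
    have hg : (g : ∀ _ : ℕ, ℝ) d = (∏ i ∈ Ioc d (d + m), w i) * (x : ∀ _ : ℕ, ℝ) (d + m) := by
      simp only [g, lp.coeFn_sub, Pi.sub_apply, lp.single_apply, Pi.single_eq_of_ne hd0.ne',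
        sub_zero, hT.pow_apply]
    rw [add_comm m d, ← prod_Ioc_consecutive w (Nat.zero_le d) (Nat.le_add_right d m)] at h1
    rw [Real.norm_eq_abs, inv_le_iff_one_le_mul₀' (prod_pos fun i _ => hw i)]
    calc 1 ≤ _ := h1
      _ = (∏ i ∈ Ioc 0 d, w i) * (g : ∀ _ : ℕ, ℝ) d := by rw [hg]; ring
      _ ≤ (∏ i ∈ Ioc 0 d, w i) * |(g : ∀ _ : ℕ, ℝ) d| := by
        gcongr
        · exact (prod_pos fun i _ => hw i).le
        · exact le_abs_self _
  calc ∑ d ∈ D, (∏ i ∈ Ioc 0 d, w i)⁻¹ ^ p.toReal ≤ ∑ d ∈ D, ‖(g : ∀ _ : ℕ, ℝ) d‖ ^ p.toReal :=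
        sum_le_sum fun d hd => Real.rpow_le_rpow (inv_pos.2 (prod_pos fun i _ => hw i)).le
          (hcoord d hd) hq.le
    _ ≤ ‖g‖ ^ p.toReal := lp.sum_rpow_le_norm_rpow hq g D
    _ ≤ 1 := Real.rpow_le_one (norm_nonneg _) (mem_ball_iff_norm.1 hm).le hq.le

end IsWeightedBackwardShift

theorem stmt5 (p : ℝ≥0∞) [hp : Fact (1 ≤ p)] (hp' : p ≠ ⊤)
    (w : ℕ → ℝ) (hw : ∀ n, 0 < w n) (C : ℝ) (hC : ∀ n, w n ≤ C)
    (T : lp (fun _ : ℕ => ℝ) p →L[ℝ] lp (fun _ : ℕ => ℝ) p)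
    (hT : ∀ (x : lp (fun _ : ℕ => ℝ) p) (k : ℕ), (T x : ∀ _ : ℕ, ℝ) k = w (k+1) * (x : ∀ _ : ℕ, ℝ) (k+1))
    (hUFHC : ∃ x, uFreqHCVec T x) :
    Summable fun n : ℕ => (1 / ∏ i ∈ Finset.Icc 1 (n+1), w i) ^ p.toReal := by
  obtain ⟨x, hx⟩ := hUFHC
  have hE : 0 < upperDensity {n | (T ^ n) x ∈ Metric.ball (lp.single p 0 2) 1} :=
    hx _ Metric.isOpen_ball ⟨_, Metric.mem_ball_self one_pos⟩
  have hq : 0 ≤ p.toReal := ENNReal.toReal_nonneg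
  have hsum := summable_of_upperDensity_pos hE
    (fun d => (Real.rpow_pos_of_pos (inv_pos.2 (prod_pos fun i _ => hw i)) _).le)
    (Real.one_le_rpow (le_max_right C 1) hq) (inv_prod_rpow_le_mul hw hC hq)
    fun m hm D hD => IsWeightedBackwardShift.sum_inv_prod_rpow_le hT hw hp' hm D hD
  simpa [← Icc_add_one_left_eq_Ioc, one_div] using (summable_nat_add_iff 1).2 hsum
end

section
/- There exist a real number a > 1 and ε > 0 such that, setting I_u = [(1-4ε)a^u, (1+4ε)a^u] and J_u = [(1-2ε)a^u, (1+2ε)a^u] for u ∈ ℕ, one has: the upper density of ⋃_{u≥1} I_u ∩ ℕ is strictly less than 1; for all u > v ≥ 1 the intervals J_u and J_v are disjoint; and for all u > v ≥ 1, J_u − J_v ⊆ I_u (i.e., every difference x − y with x ∈ J_u, y ∈ J_v lies in I_u). -/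
open Filter Topology
open scoped Classical ENNReal

/-!
Take `a = 100` and `ε = 1 / 100`. Then `I_{v+1} ∩ ℕ = [96 · 100^v, 104 · 100^v]`, and the blocks
meeting `[0, N]` have total size at most a geometric sum dominated by the last block, which starts
below `N`; hence the upper density is at most `9 · 100 / (99 · 96) < 1`. The two statements about
the intervals `J_u` only use `a^u ≥ a · a^v` for `u > v`.
-/

open Finset

theorem upperDensity_le_of_eventually_card_le (A : Set ℕ) (c : ℝ)
    (h : ∀ᶠ N in atTop, (#{n ∈ range (N + 1) | n ∈ A} : ℝ) ≤ c * (N + 1)) :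
    upperDensity A ≤ c := by
  refine limsup_le_of_le (isCoboundedUnder_le_of_le atTop fun N => by positivity) ?_
  filter_upwards [h] with N hN
  rwa [div_le_iff₀ (by positivity)]

theorem card_filter_mem_iUnion_Icc_pow_le {b c : ℕ} (d : ℕ) (hb : 1 < b) (hc : 0 < c) (N : ℕ) :
    #{n ∈ range (N + 1) | n ∈ ⋃ v, Set.Icc (c * b ^ v) (d * b ^ v)} ≤
      (d - c + 1) * ∑ v ∈ range (Nat.log b (N / c) + 1), b ^ v := by
  calc #{n ∈ range (N + 1) | n ∈ ⋃ v, Set.Icc (c * b ^ v) (d * b ^ v)}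
      ≤ #((range (Nat.log b (N / c) + 1)).biUnion fun v => Icc (c * b ^ v) (d * b ^ v)) := by
        refine card_le_card fun n hn => ?_
        simp only [mem_filter, mem_range, Set.mem_iUnion, Set.mem_Icc] at hn
        obtain ⟨hnN, v, hcn, hnd⟩ := hn
        have hv : v ≤ Nat.log b (N / c) :=
          Nat.le_log_of_pow_le hb ((Nat.le_div_iff_mul_le hc).2 (by linarith))
        exact mem_biUnion.2 ⟨v, mem_range.2 (by omega), mem_Icc.2 ⟨hcn, hnd⟩⟩
    _ ≤ ∑ v ∈ range (Nat.log b (N / c) + 1), #(Icc (c * b ^ v) (d * b ^ v)) := card_biUnion_le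
    _ ≤ ∑ v ∈ range (Nat.log b (N / c) + 1), (d - c + 1) * b ^ v := by
        refine sum_le_sum fun v _ => ?_
        have hpow : 1 ≤ b ^ v := Nat.one_le_pow _ _ (by omega)
        rw [Nat.card_Icc, add_mul, one_mul, Nat.sub_mul]
        omega
    _ = (d - c + 1) * ∑ v ∈ range (Nat.log b (N / c) + 1), b ^ v := (mul_sum ..).symm

theorem upperDensity_iUnion_Icc_pow_le {b c : ℕ} (d : ℕ) (hb : 1 < b) (hc : 0 < c) :
    upperDensity (⋃ v, Set.Icc (c * b ^ v) (d * b ^ v)) ≤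
      (d - c + 1 : ℕ) * b / ((b - 1) * c) := by
  apply upperDensity_le_of_eventually_card_le
  filter_upwards [eventually_ge_atTop c] with N hN
  set M := Nat.log b (N / c)
  have hlast : b ^ M * c ≤ N :=
    (Nat.le_div_iff_mul_le hc).1 (Nat.pow_log_le_self b (Nat.div_pos hN hc).ne')
  have hlast' : (b : ℝ) ^ M * c ≤ N := by exact_mod_cast hlast
  have hgeom : (∑ v ∈ range (M + 1), (b : ℝ) ^ v) * (b - 1) ≤ b * b ^ M := by
    rw [geom_sum_mul, pow_succ']
    linarith
  have hcount : (#{n ∈ range (N + 1) | n ∈ ⋃ v, Set.Icc (c * b ^ v) (d * b ^ v)} : ℝ) ≤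
      (d - c + 1 : ℕ) * ∑ v ∈ range (M + 1), (b : ℝ) ^ v := by
    exact_mod_cast card_filter_mem_iUnion_Icc_pow_le d hb hc N
  have hb1 : (0 : ℝ) < b - 1 := sub_pos.2 (Nat.one_lt_cast.2 hb)
  rw [div_mul_eq_mul_div, le_div_iff₀ (by positivity)]
  calc (#{n ∈ range (N + 1) | n ∈ ⋃ v, Set.Icc (c * b ^ v) (d * b ^ v)} : ℝ) * ((b - 1) * c)
      ≤ (d - c + 1 : ℕ) * (∑ v ∈ range (M + 1), (b : ℝ) ^ v) * ((b - 1) * c) := by gcongr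
    _ = (d - c + 1 : ℕ) * ((∑ v ∈ range (M + 1), (b : ℝ) ^ v) * (b - 1)) * c := by ring
    _ ≤ (d - c + 1 : ℕ) * (b * b ^ M) * c := by gcongr
    _ = (d - c + 1 : ℕ) * b * (b ^ M * c) := by ring
    _ ≤ (d - c + 1 : ℕ) * b * (N + 1) := by gcongr; linarith

theorem setOf_exists_mem_Icc_pow_eq_iUnion {b c d : ℕ} {r s : ℝ} (hr : r * b = c) (hs : s * b = d) :
    {n : ℕ | ∃ u : ℕ, 1 ≤ u ∧ (n : ℝ) ∈ Set.Icc (r * b ^ u) (s * b ^ u)} =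
      ⋃ v, Set.Icc (c * b ^ v) (d * b ^ v) := by
  have hscale (t : ℝ) (e : ℕ) (ht : t * b = e) (v : ℕ) : t * (b : ℝ) ^ (v + 1) = (e * b ^ v : ℕ) := by
    push_cast
    rw [← ht]
    ring
  ext n
  simp only [Set.mem_ofPred_eq, Set.mem_iUnion]
  constructor
  · rintro ⟨u, hu, hn⟩
    obtain ⟨v, rfl⟩ : ∃ v, u = v + 1 := ⟨u - 1, by omega⟩
    rw [hscale r c hr, hscale s d hs, Set.mem_Icc, Nat.cast_le, Nat.cast_le] at hn
    exact ⟨v, hn⟩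
  · rintro ⟨v, hn⟩
    refine ⟨v + 1, by omega, ?_⟩
    rwa [hscale r c hr, hscale s d hs, Set.mem_Icc, Nat.cast_le, Nat.cast_le]

section Scaling

variable {a ε X Y : ℝ}

theorem disjoint_Icc_scaled_of_mul_le (hε : 2 * ε ≤ 1) (ha : 1 + 2 * ε < (1 - 2 * ε) * a)
    (hY : 0 < Y) (hXY : a * Y ≤ X) :
    Disjoint (Set.Icc ((1 - 2 * ε) * X) ((1 + 2 * ε) * X))
      (Set.Icc ((1 - 2 * ε) * Y) ((1 + 2 * ε) * Y)) := by
  rw [Set.disjoint_left]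
  rintro x ⟨hXx, -⟩ ⟨-, hxY⟩
  have : (1 + 2 * ε) * Y < (1 - 2 * ε) * X :=
    calc (1 + 2 * ε) * Y < (1 - 2 * ε) * a * Y := by gcongr
      _ ≤ (1 - 2 * ε) * X := by rw [mul_assoc]; gcongr
  linarith

theorem sub_mem_Icc_scaled_of_mul_le (hε : 0 ≤ ε) (ha : 1 + 2 * ε ≤ 2 * ε * a)
    (hY : 0 ≤ Y) (hXY : a * Y ≤ X) {x y : ℝ}
    (hx : x ∈ Set.Icc ((1 - 2 * ε) * X) ((1 + 2 * ε) * X))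
    (hy : y ∈ Set.Icc ((1 - 2 * ε) * Y) ((1 + 2 * ε) * Y)) :
    x - y ∈ Set.Icc ((1 - 4 * ε) * X) ((1 + 4 * ε) * X) := by
  have hgap : (1 + 2 * ε) * Y ≤ 2 * ε * X :=
    calc (1 + 2 * ε) * Y ≤ 2 * ε * a * Y := by gcongr
      _ ≤ 2 * ε * X := by rw [mul_assoc]; gcongr
  obtain ⟨hx₁, hx₂⟩ := hx
  obtain ⟨hy₁, hy₂⟩ := hy
  constructor <;> nlinarith

end Scaling

theorem stmt9 : ∃ (a ε : ℝ), 1 < a ∧ 0 < ε ∧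
    upperDensity {n : ℕ | ∃ u : ℕ, 1 ≤ u ∧ (n : ℝ) ∈ Set.Icc ((1-4*ε)*a^u) ((1+4*ε)*a^u)} < 1 ∧
    (∀ u v : ℕ, 1 ≤ v → v < u →
      Disjoint (Set.Icc ((1-2*ε)*a^u) ((1+2*ε)*a^u)) (Set.Icc ((1-2*ε)*a^v) ((1+2*ε)*a^v))) ∧
    (∀ u v : ℕ, 1 ≤ v → v < u →
      ∀ x ∈ Set.Icc ((1-2*ε)*a^u) ((1+2*ε)*a^u), ∀ y ∈ Set.Icc ((1-2*ε)*a^v) ((1+2*ε)*a^v),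
        x - y ∈ Set.Icc ((1-4*ε)*a^u) ((1+4*ε)*a^u)) := by
  have hpow {u v : ℕ} (hvu : v < u) : (100 : ℝ) * 100 ^ v ≤ 100 ^ u := by
    rw [← pow_succ']
    exact pow_le_pow_right₀ (by norm_num) hvu
  refine ⟨100, 1 / 100, by norm_num, by norm_num, ?_,
    fun u v _ hvu => disjoint_Icc_scaled_of_mul_le (by norm_num) (by norm_num) (by positivity)
      (hpow hvu),
    fun u v _ hvu x hx y hy => sub_mem_Icc_scaled_of_mul_le (by norm_num) (by norm_num)
      (by positivity) (hpow hvu) hx hy⟩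
  have hblocks := setOf_exists_mem_Icc_pow_eq_iUnion (b := 100) (c := 96) (d := 104)
    (r := 1 - 4 * (1 / 100)) (s := 1 + 4 * (1 / 100)) (by norm_num) (by norm_num)
  push_cast at hblocks
  rw [hblocks]
  exact (upperDensity_iUnion_Icc_pow_le 104 (by norm_num) (by norm_num)).trans_lt (by norm_num)
end

section
/- Fix a > 1, ε > 0 and b ∈ ℕ, b ≥ 1. Let A ⊆ ℕ be syndetic. Then the set E = ⋃_{u∈A} ([(1-ε)a^u, (1+ε)a^u] ∩ bℕ) has positive lower density. -/
open Filter Topology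
open scoped Classical ENNReal

/-!
Cut `ℕ` into the scales `[(1+ε)a^t, (1+ε)a^(t+1))`. Syndeticity puts some `u ∈ A` among any
`M + 1` consecutive exponents, so every large `n` has such a `u` with `(1+ε)a^u ≤ n < (1+ε)a^(u+M+1)`.
The whole window `[a^u, (1+ε)a^u]` then lies below `n` and contains about `ε a^u / b` multiples
of `b`, which is a fixed proportion `ε / (b (1+ε) a^(M+1))` of `n`.
-/

open Finset

theorem exists_mem_le_lt_of_syndetic {A : Set ℕ} {M : ℕ}
    (hA : ∀ n : ℕ, ∃ k ∈ Set.Icc n (n + M), k ∈ A) {g : ℕ → ℝ} (hg_mono : Monotone g)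
    (hg : Tendsto g atTop atTop) {x : ℝ} (hx : g M ≤ x) :
    ∃ u ∈ A, g u ≤ x ∧ x < g (u + M + 1) := by
  have hex : ∃ t, x < g (t + M + 1) := by
    obtain ⟨t, ht⟩ := (hg.eventually_gt_atTop x).exists_forall_of_atTop
    exact ⟨t, ht _ (by omega)⟩
  set t := Nat.find hex
  have hlow : g (t + M) ≤ x := by
    rcases Nat.eq_zero_or_pos t with h0 | hpos
    · simpa [h0] using hx
    · have := Nat.find_min hex (Nat.sub_lt hpos one_pos)
      rwa [not_lt, show t - 1 + M + 1 = t + M by omega] at this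
  obtain ⟨u, ⟨htu, hut⟩, huA⟩ := hA t
  exact ⟨u, huA, (hg_mono hut).trans hlow,
    (Nat.find_spec hex).trans_le (hg_mono (by omega))⟩

theorem sub_div_sub_one_le_card_of_multiples_mem {S : Set ℕ} {b n : ℕ} (hb : 0 < b) {x y : ℝ}
    (hx : 0 < x) (hy : y ≤ n)
    (hS : ∀ k : ℕ, 1 ≤ k → x ≤ ((b * k : ℕ) : ℝ) → ((b * k : ℕ) : ℝ) ≤ y → b * k ∈ S) :
    (y - x) / b - 1 ≤ (((range (n + 1)).filter (· ∈ S)).card : ℝ) := by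
  have hb' : (0 : ℝ) < b := by exact_mod_cast hb
  set k₁ := ⌈x / b⌉₊
  set k₂ := ⌊y / b⌋₊
  have hmaps : Set.MapsTo (b * ·) (Icc k₁ k₂ : Set ℕ) ((range (n + 1)).filter (· ∈ S) : Set ℕ) := by
    intro k hk
    rw [coe_Icc, Set.mem_Icc] at hk
    have hk₁ : 1 ≤ k := (Nat.ceil_pos.mpr (by positivity)).trans_le hk.1
    have hlo : x ≤ ((b * k : ℕ) : ℝ) := by
      have : x / b ≤ k := (Nat.le_ceil _).trans (by exact_mod_cast hk.1)
      push_cast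
      rwa [div_le_iff₀ hb', mul_comm] at this
    have hhi : ((b * k : ℕ) : ℝ) ≤ y := by
      have hy0 : 0 ≤ y / b := by
        by_contra! h
        have : k₂ = 0 := Nat.floor_eq_zero.mpr (h.trans one_pos)
        omega
      have : (k : ℝ) ≤ y / b := (Nat.cast_le.mpr hk.2).trans (Nat.floor_le hy0)
      push_cast
      rwa [le_div_iff₀ hb', mul_comm] at this
    have hbn : b * k ≤ n := by exact_mod_cast hhi.trans hy
    simp only [coe_filter, mem_range, Set.mem_ofPred_eq]
    exact ⟨by omega, hS k hk₁ hlo hhi⟩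
  have hcard := card_le_card_of_injOn _ hmaps
    (fun _ _ _ _ h => Nat.eq_of_mul_eq_mul_left hb h)
  have hIcc : (k₂ : ℝ) + 1 ≤ (Icc k₁ k₂).card + k₁ := by
    rw [Nat.card_Icc]; exact_mod_cast le_tsub_add
  have hk₁ : (k₁ : ℝ) < x / b + 1 := Nat.ceil_lt_add_one (by positivity)
  have hk₂ : y / b - 1 < k₂ := Nat.sub_one_lt_floor _
  have hsplit : (y - x) / b = y / b - x / b := sub_div _ _ _
  have hcard' : ((Icc k₁ k₂).card : ℝ) ≤ ((range (n + 1)).filter (· ∈ S)).card := by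
    exact_mod_cast hcard
  linarith

theorem lowerDensity_pos_of_eventually_le_card {E : Set ℕ} {α β : ℝ} (hα : 0 < α)
    (h : ∀ᶠ n : ℕ in atTop, α * n - β ≤ (((range (n + 1)).filter (· ∈ E)).card : ℝ)) :
    0 < lowerDensity E := by
  have hbdd : ∀ n : ℕ, (((range (n + 1)).filter (· ∈ E)).card : ℝ) / (n + 1) ≤ 1 := by
    intro n
    rw [div_le_one (by positivity)]
    exact_mod_cast (card_filter_le _ _).trans (card_range _).le
  have hev : ∀ᶠ n : ℕ in atTop, α / 4 ≤ (((range (n + 1)).filter (· ∈ E)).card : ℝ) / (n + 1) := by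
    obtain ⟨N, hN⟩ := exists_nat_ge (2 * β / α)
    filter_upwards [h, eventually_ge_atTop (max N 1)] with n hn hnN
    rw [le_div_iff₀ (by positivity)]
    have h1 : (1 : ℝ) ≤ n := by exact_mod_cast (le_max_right N 1).trans hnN
    have h2 : 2 * β / α ≤ n := hN.trans (by exact_mod_cast (le_max_left N 1).trans hnN)
    rw [div_le_iff₀ hα] at h2
    nlinarith
  exact (by positivity : (0 : ℝ) < α / 4).trans_le
    (le_liminf_of_le (isCoboundedUnder_ge_of_le atTop hbdd) hev)

theorem stmt10 (a ε : ℝ) (ha : 1 < a) (hε : 0 < ε) (b : ℕ) (hb : 1 ≤ b)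
    (A : Set ℕ) (M : ℕ) (hA : ∀ n : ℕ, ∃ k ∈ Set.Icc n (n + M), k ∈ A) :
    0 < lowerDensity {m : ℕ | ∃ u ∈ A,
      ((1-ε)*a^u ≤ (m : ℝ) ∧ (m : ℝ) ≤ (1+ε)*a^u) ∧ ∃ k : ℕ, 1 ≤ k ∧ m = b * k} := by
  set E : Set ℕ := {m : ℕ | ∃ u ∈ A,
    ((1-ε)*a^u ≤ (m : ℝ) ∧ (m : ℝ) ≤ (1+ε)*a^u) ∧ ∃ k : ℕ, 1 ≤ k ∧ m = b * k}
  have hε₁ : 0 < 1 + ε := by linarith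
  set g : ℕ → ℝ := fun t => (1 + ε) * a ^ t
  have hg_mono : Monotone g := fun _ _ h => mul_le_mul_of_nonneg_left
    (pow_right_mono₀ ha.le h) hε₁.le
  have hg : Tendsto g atTop atTop := (tendsto_pow_atTop_atTop_of_one_lt ha).const_mul_atTop hε₁
  set D := (1 + ε) * a ^ (M + 1)
  refine lowerDensity_pos_of_eventually_le_card (α := ε / (b * D)) (β := 1) (by positivity) ?_
  filter_upwards [eventually_ge_atTop ⌈g M⌉₊] with n hn
  obtain ⟨u, huA, hlo, hhi⟩ :=
    exists_mem_le_lt_of_syndetic hA hg_mono hg (x := n) (Nat.ceil_le.mp hn)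
  have hau : 0 < a ^ u := pow_pos (by linarith) u
  have hnD : (n : ℝ) ≤ D * a ^ u := by
    have : g (u + M + 1) = D * a ^ u := by simp only [g, D]; ring
    linarith
  calc ε / (b * D) * n - 1 ≤ ε / (b * D) * (D * a ^ u) - 1 := by gcongr
    _ = (g u - a ^ u) / b - 1 := by simp only [g, D]; field_simp; ring
    _ ≤ _ := sub_div_sub_one_le_card_of_multiples_mem (S := E) hb hau hlo
      fun k hk hk_lo hk_hi => ⟨u, huA, ⟨by nlinarith, hk_hi⟩, k, hk, rfl⟩
end

section
/- Let X be a separable Banach space and T ∈ L(X) an invertible frequently hypercyclic operator. Then T^{-1} is U-frequently hypercyclic. -/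
open Filter Topology
open scoped Classical ENNReal

/-! Let `δ_V > 0` be the lower density of the visits of the `f`-orbit of `x` to a basic open set
`V`. For each `N`, the points `y` whose backward orbit `g^[j] y`, `j ≤ n`, visits `V` with
frequency above `δ_V / 2` for some `n ≥ N` form an open set. It is dense because `f^[n] x` reads
the first `n + 1` points of the orbit of `x` backwards, and `f^[n] x` lies in any given open set
for infinitely many `n`. By Baire, a point of the intersection over all `V` and `N` works. -/

open Function

-- `lowerDensity A` and `upperDensity A` are, by definition, the liminf and limsup of this.
noncomputable def partialDensity (A : Set ℕ) (n : ℕ) : ℝ :=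
  (((Finset.range (n + 1)).filter (· ∈ A)).card : ℝ) / (n + 1)

section partialDensity

variable {A B : Set ℕ} {c : ℝ}

lemma partialDensity_nonneg (A : Set ℕ) (n : ℕ) : 0 ≤ partialDensity A n := by
  unfold partialDensity; positivity

lemma partialDensity_le_one (A : Set ℕ) (n : ℕ) : partialDensity A n ≤ 1 := by
  unfold partialDensity
  rw [div_le_one (by positivity)]
  exact_mod_cast (Finset.card_filter_le _ _).trans (Finset.card_range _).le

lemma partialDensity_le_partialDensity {n : ℕ} (h : ∀ i ≤ n, i ∈ A → i ∈ B) :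
    partialDensity A n ≤ partialDensity B n := by
  refine div_le_div_of_nonneg_right (Nat.cast_le.2 (Finset.card_le_card fun i hi => ?_))
    (by positivity)
  rw [Finset.mem_filter, Finset.mem_range] at hi ⊢
  exact ⟨hi.1, h i (Nat.lt_succ_iff.1 hi.1) hi.2⟩

lemma eventually_lt_partialDensity (h : c < lowerDensity A) :
    ∀ᶠ n in atTop, c < partialDensity A n :=
  eventually_lt_of_lt_liminf h (isBoundedUnder_of ⟨0, partialDensity_nonneg A⟩)

lemma le_upperDensity_of_frequently (h : ∃ᶠ n in atTop, c < partialDensity A n) :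
    c ≤ upperDensity A :=
  le_limsup_of_frequently_le (h.mono fun _ => le_of_lt)
    (isBoundedUnder_of ⟨1, partialDensity_le_one A⟩)

lemma frequently_mem_of_lowerDensity_pos (h : 0 < lowerDensity A) : ∃ᶠ n in atTop, n ∈ A := by
  rw [Nat.frequently_atTop_iff_infinite]
  intro hfin
  set M := hfin.toFinset.card
  have hbound : ∀ n, partialDensity A n ≤ (M : ℝ) / (n + 1) := fun n => by
    unfold partialDensity
    gcongr
    exact_mod_cast Finset.card_le_card fun m hm => hfin.mem_toFinset.2 (Finset.mem_filter.1 hm).2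
  have hsmall : ∀ᶠ n : ℕ in atTop, (M : ℝ) / (n + 1) < lowerDensity A / 2 :=
    (tendsto_const_nhds.div_atTop
      (tendsto_natCast_atTop_atTop.atTop_add tendsto_const_nhds)).eventually
        (gt_mem_nhds (half_pos h))
  obtain ⟨n, hn⟩ := ((eventually_lt_partialDensity (half_lt_self h)).and hsmall).exists
  linarith [hbound n, hn.1, hn.2]

end partialDensity

lemma iterate_apply_iterate_of_le {α : Type*} {f g : α → α} (hgf : LeftInverse g f) {j n : ℕ}
    (h : j ≤ n) (x : α) : g^[j] (f^[n] x) = f^[n - j] x := by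
  obtain ⟨k, rfl⟩ := Nat.exists_eq_add_of_le h
  rw [Nat.add_sub_cancel_left, iterate_add_apply, hgf.iterate j]

lemma partialDensity_iterate_reverse {α : Type*} {f g : α → α} (hgf : LeftInverse g f)
    (U : Set α) (x : α) (n : ℕ) :
    partialDensity {j | g^[j] (f^[n] x) ∈ U} n = partialDensity {m | f^[m] x ∈ U} n := by
  unfold partialDensity
  congr 2
  rw [Finset.card_filter, Finset.card_filter, ← Finset.sum_range_reflect]
  refine Finset.sum_congr rfl fun j hj => ?_
  rw [Finset.mem_range] at hj
  simp only [Set.mem_ofPred_eq, Nat.add_sub_cancel,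
    iterate_apply_iterate_of_le hgf (Nat.sub_le n j), Nat.sub_sub_self (Nat.lt_succ_iff.1 hj)]

lemma lowerSemicontinuous_partialDensity {X : Type*} [TopologicalSpace X] {U : ℕ → Set X}
    (hU : ∀ i, IsOpen (U i)) (n : ℕ) :
    LowerSemicontinuous fun y => partialDensity {i | y ∈ U i} n := by
  intro y c hc
  have hnear : ∀ᶠ z in 𝓝 y, ∀ i ∈ Finset.range (n + 1), y ∈ U i → z ∈ U i :=
    (Finset.eventually_all _).2 fun i _ => by
      by_cases hy : y ∈ U i
      · filter_upwards [(hU i).mem_nhds hy] with z hz using fun _ => hz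
      · exact Eventually.of_forall fun _ h => absurd h hy
  filter_upwards [hnear] with z hz
  exact hc.trans_le (partialDensity_le_partialDensity fun i hi =>
    hz i (Finset.mem_range.2 (Nat.lt_succ_of_le hi)))

section Baire

variable {X : Type*} [TopologicalSpace X] {f g : X → X} {x : X}

lemma isOpen_iUnion_lt_partialDensity (hg : Continuous g) {V : Set X} (hV : IsOpen V) (c : ℝ)
    (N : ℕ) : IsOpen (⋃ n ≥ N, {y | c < partialDensity {j | g^[j] y ∈ V} n}) :=
  isOpen_biUnion fun n _ =>
    (lowerSemicontinuous_partialDensity (fun j => hV.preimage (hg.iterate j)) n).isOpen_preimage c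

lemma dense_iUnion_lt_partialDensity (hgf : LeftInverse g f)
    (hx : ∀ U, IsOpen U → U.Nonempty → 0 < lowerDensity {n | f^[n] x ∈ U}) {V : Set X} {c : ℝ}
    (hc : c < lowerDensity {n | f^[n] x ∈ V}) (N : ℕ) :
    Dense (⋃ n ≥ N, {y | c < partialDensity {j | g^[j] y ∈ V} n}) := by
  refine dense_iff_inter_open.2 fun W hW hWne => ?_
  obtain ⟨n, hnW, hnV, hnN⟩ := ((frequently_mem_of_lowerDensity_pos (hx W hW hWne)).and_eventually
    ((eventually_lt_partialDensity hc).and (eventually_ge_atTop N))).exists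
  refine ⟨f^[n] x, hnW, Set.mem_biUnion hnN ?_⟩
  rwa [Set.mem_ofPred_eq, partialDensity_iterate_reverse hgf]

open TopologicalSpace in
theorem exists_forall_pos_upperDensity_of_forall_pos_lowerDensity [BaireSpace X]
    [SecondCountableTopology X] (hg : Continuous g) (hgf : LeftInverse g f)
    (hx : ∀ U, IsOpen U → U.Nonempty → 0 < lowerDensity {n | f^[n] x ∈ U}) :
    ∃ y, ∀ U, IsOpen U → U.Nonempty → 0 < upperDensity {n | g^[n] y ∈ U} := by
  let δ (V : Set X) := lowerDensity {n | f^[n] x ∈ V} / 2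
  let G : Set X × ℕ → Set X := fun p =>
    ⋃ n ≥ p.2, {y | δ p.1 < partialDensity {j | g^[j] y ∈ p.1} n}
  have hpos : ∀ V ∈ countableBasis X, 0 < lowerDensity {n | f^[n] x ∈ V} := fun V hV =>
    hx V (isOpen_of_mem_countableBasis hV) (nonempty_of_mem_countableBasis hV)
  have : Nonempty X := ⟨x⟩
  obtain ⟨y, hy⟩ := (dense_biInter_of_isOpen (S := countableBasis X ×ˢ Set.univ) (f := G)
    (fun p hp => isOpen_iUnion_lt_partialDensity hg (isOpen_of_mem_countableBasis hp.1) _ _)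
    ((countable_countableBasis X).prod Set.countable_univ)
    (fun p hp => dense_iUnion_lt_partialDensity hgf hx (half_lt_self (hpos _ hp.1)) _)).nonempty
  refine ⟨y, fun U hU ⟨u, hu⟩ => ?_⟩
  obtain ⟨V, hVb, -, hVU⟩ := (isBasis_countableBasis X).exists_subset_of_mem_open hu hU
  have hfreq : ∃ᶠ n in atTop, δ V < partialDensity {j | g^[j] y ∈ U} n := by
    refine frequently_atTop.2 fun N => ?_
    obtain ⟨n, hnN, hn⟩ := Set.mem_iUnion₂.1 (Set.mem_iInter₂.1 hy (V, N) ⟨hVb, trivial⟩)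
    exact ⟨n, hnN, hn.trans_le (partialDensity_le_partialDensity fun j _ hj => hVU hj)⟩
  exact (half_pos (hpos V hVb)).trans_le (le_upperDensity_of_frequently hfreq)

end Baire

theorem stmt16 {X : Type*} [NormedAddCommGroup X] [NormedSpace ℝ X] [CompleteSpace X]
    [TopologicalSpace.SeparableSpace X]
    (T : X ≃L[ℝ] X) (hT : ∃ x, freqHCVec (T : X →L[ℝ] X) x) :
    ∃ y, uFreqHCVec (T.symm : X →L[ℝ] X) y := by
  obtain ⟨x, hx⟩ := hT
  simp only [freqHCVec, FunLike.coe_pow_eq_iterate, ContinuousLinearEquiv.coe_coe] at hx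
  simpa only [uFreqHCVec, FunLike.coe_pow_eq_iterate, ContinuousLinearEquiv.coe_coe] using
    exists_forall_pos_upperDensity_of_forall_pos_lowerDensity T.symm.continuous
      T.symm_apply_apply hx
end
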